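/- arXiv:1406.6902 — 3 statements merged into one kernel-verified Lean document; each statement's English description precedes it below -/
import Mathlib

section
/- Let (Ω1, ℱ, P1) and (Ω2, 𝒢, P2) be probability spaces, let ℱ' ⊆ ℱ and 𝒢' ⊆ 𝒢 be sub-σ-algebras, and let Z1 ∈ L¹(Ω1, ℱ, P1), Z2 ∈ L¹(Ω2, 𝒢, P2). Then the random variable (ω1, ω2) ↦ Z1(ω1)·Z2(ω2) is integrable on the product space (Ω1 × Ω2, ℱ ⊗ 𝒢, P1 × P2), and (P1 × P2)-almost everywhere one has E[(ω1,ω2) ↦ Z1(ω1)Z2(ω2) | ℱ' ⊗ 𝒢'](ω1, ω2) = E[Z1 | ℱ'](ω1) · E[Z2 | 𝒢'](ω2). -/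
/-!
Both sides are `F' ⊗ G'`-measurable and integrable, so it suffices that their integrals agree on
every `F' ⊗ G'`-measurable set. On a rectangle `A ×ˢ B` both integrals factor by Fubini, and the
defining property of the two conditional expectations matches the factors. Rectangles form a
π-system generating `F' ⊗ G'`, and the class of sets on which two integrable functions have equal
integrals is closed under complements and countable disjoint unions.
-/

open MeasureTheory

namespace MeasureTheory

variable {α E : Type*} [NormedAddCommGroup E] [NormedSpace ℝ E]

theorem setIntegral_eq_of_isPiSystem {m m₀ : MeasurableSpace α} {μ : Measure α} (hm : m ≤ m₀)
    {S : Set (Set α)} (hgen : m = MeasurableSpace.generateFrom S) (hS : IsPiSystem S)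
    {f g : α → E} (hf : Integrable f μ) (hg : Integrable g μ)
    (hS_univ : Set.univ ∈ S) (hbasic : ∀ s ∈ S, ∫ x in s, f x ∂μ = ∫ x in s, g x ∂μ)
    {s : Set α} (hs : MeasurableSet[m] s) : ∫ x in s, f x ∂μ = ∫ x in s, g x ∂μ := by
  induction s, hs using MeasurableSpace.induction_on_inter hgen hS with
  | empty => simp
  | basic t ht => exact hbasic t ht
  | compl t ht ih =>
    have huniv := hbasic _ hS_univ
    rw [setIntegral_univ, setIntegral_univ] at huniv
    rw [setIntegral_compl (hm t ht) hf, setIntegral_compl (hm t ht) hg, huniv, ih]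
  | iUnion t hdisj ht ih =>
    have ht' : ∀ i, MeasurableSet (t i) := fun i => hm _ (ht i)
    rw [integral_iUnion ht' hdisj hf.integrableOn, integral_iUnion ht' hdisj hg.integrableOn]
    exact tsum_congr ih

end MeasureTheory

section ProductCondExp

variable {Ω₁ Ω₂ 𝕜 : Type*} [RCLike 𝕜] {F : MeasurableSpace Ω₁} {G : MeasurableSpace Ω₂}
  [m₁ : MeasurableSpace Ω₁] [m₂ : MeasurableSpace Ω₂]
  {μ₁ : Measure Ω₁} {μ₂ : Measure Ω₂} [IsFiniteMeasure μ₁] [IsFiniteMeasure μ₂]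

theorem MeasurableSpace.prod_mono (hF : F ≤ m₁) (hG : G ≤ m₂) : F.prod G ≤ m₁.prod m₂ :=
  sup_le_sup (MeasurableSpace.comap_mono hF) (MeasurableSpace.comap_mono hG)

theorem setIntegral_prod_mul_condExp (hF : F ≤ m₁) (hG : G ≤ m₂) {Z₁ : Ω₁ → 𝕜} {Z₂ : Ω₂ → 𝕜}
    (hZ₁ : Integrable Z₁ μ₁) (hZ₂ : Integrable Z₂ μ₂) {A : Set Ω₁} {B : Set Ω₂}
    (hA : MeasurableSet[F] A) (hB : MeasurableSet[G] B) :
    ∫ p in A ×ˢ B, (μ₁[Z₁|F]) p.1 * (μ₂[Z₂|G]) p.2 ∂μ₁.prod μ₂ =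
      ∫ p in A ×ˢ B, Z₁ p.1 * Z₂ p.2 ∂μ₁.prod μ₂ := by
  rw [setIntegral_prod_mul, setIntegral_prod_mul, setIntegral_condExp hF hZ₁ hA,
    setIntegral_condExp hG hZ₂ hB]

theorem condExp_prod_mul (hF : F ≤ m₁) (hG : G ≤ m₂) {Z₁ : Ω₁ → 𝕜} {Z₂ : Ω₂ → 𝕜}
    (hZ₁ : Integrable Z₁ μ₁) (hZ₂ : Integrable Z₂ μ₂) :
    (μ₁.prod μ₂)[fun p => Z₁ p.1 * Z₂ p.2 | F.prod G]
      =ᵐ[μ₁.prod μ₂] fun p => (μ₁[Z₁|F]) p.1 * (μ₂[Z₂|G]) p.2 := by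
  have hle := MeasurableSpace.prod_mono hF hG
  have hZ : Integrable (fun p : Ω₁ × Ω₂ => Z₁ p.1 * Z₂ p.2) (μ₁.prod μ₂) := hZ₁.mul_prod hZ₂
  have hE : Integrable (fun p : Ω₁ × Ω₂ => (μ₁[Z₁|F]) p.1 * (μ₂[Z₂|G]) p.2) (μ₁.prod μ₂) :=
    integrable_condExp.mul_prod integrable_condExp
  have hEm : StronglyMeasurable[F.prod G] fun p : Ω₁ × Ω₂ => (μ₁[Z₁|F]) p.1 * (μ₂[Z₂|G]) p.2 :=
    (stronglyMeasurable_condExp.comp_measurable (@measurable_fst _ _ F G)).mul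
      (stronglyMeasurable_condExp.comp_measurable (@measurable_snd _ _ F G))
  have hrect : ∀ s ∈ Set.image2 (· ×ˢ ·) {A | MeasurableSet[F] A} {B | MeasurableSet[G] B},
      ∫ p in s, (μ₁[Z₁|F]) p.1 * (μ₂[Z₂|G]) p.2 ∂μ₁.prod μ₂ =
        ∫ p in s, Z₁ p.1 * Z₂ p.2 ∂μ₁.prod μ₂ := by
    rintro _ ⟨A, hA, B, hB, rfl⟩
    exact setIntegral_prod_mul_condExp hF hG hZ₁ hZ₂ hA hB
  have huniv_mem :
      Set.univ ∈ Set.image2 (· ×ˢ ·) {A | MeasurableSet[F] A} {B | MeasurableSet[G] B} :=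
    ⟨_, @MeasurableSet.univ _ F, _, @MeasurableSet.univ _ G, Set.univ_prod_univ⟩
  refine (ae_eq_condExp_of_forall_setIntegral_eq hle hZ (fun _ _ _ => hE.integrableOn)
    (fun _ hs _ => ?_) hEm.aestronglyMeasurable).symm
  exact setIntegral_eq_of_isPiSystem hle (@generateFrom_prod _ _ F G).symm
    (@isPiSystem_prod _ _ F G) hE hZ huniv_mem hrect hs

end ProductCondExp

/-- Factorization of conditional expectations on a product probability space:
if `Z1 ∈ L¹(P1)` and `Z2 ∈ L¹(P2)`, then `(ω1, ω2) ↦ Z1 ω1 * Z2 ω2` is integrable on the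
product space and its conditional expectation given the product sub-σ-algebra `F' ⊗ G'`
is the product of the conditional expectations. -/
theorem stmt_0 {Ω1 Ω2 : Type*} (F' : MeasurableSpace Ω1) (G' : MeasurableSpace Ω2)
    [m1 : MeasurableSpace Ω1] [m2 : MeasurableSpace Ω2]
    (μ1 : Measure Ω1) (μ2 : Measure Ω2)
    [IsProbabilityMeasure μ1] [IsProbabilityMeasure μ2]
    (hF' : F' ≤ m1) (hG' : G' ≤ m2)
    (Z1 : Ω1 → ℝ) (Z2 : Ω2 → ℝ)
    (hZ1 : Integrable Z1 μ1) (hZ2 : Integrable Z2 μ2) :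
    Integrable (fun p : Ω1 × Ω2 => Z1 p.1 * Z2 p.2) (μ1.prod μ2) ∧
      (μ1.prod μ2)[(fun p : Ω1 × Ω2 => Z1 p.1 * Z2 p.2) | F'.prod G']
        =ᵐ[μ1.prod μ2] fun p : Ω1 × Ω2 => ((μ1[Z1|F']) p.1) * ((μ2[Z2|G']) p.2) :=
  ⟨hZ1.mul_prod hZ2, condExp_prod_mul hF' hG' hZ1 hZ2⟩
end

section
/- For every i ∈ {1, …, l_a} and every 0 ≤ t ≤ T, one has P-almost surely E[1_{T_i > T} | 𝒢^X_∞ ⊔ 𝒢^{R^i}_t] = 1_{T_i > t} · exp(−∫_t^T λ(s, X_s) ds), where 𝒢^X_∞ ⊔ 𝒢^{R^i}_t denotes the σ-algebra generated by 𝒢^X_∞ together with 𝒢^{R^i}_t. -/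
/-!
On `S = {t < τ}` the σ-algebra `𝒢^X_∞ ⊔ 𝒢^{R^i}_t` has the same trace as `𝒢^X_∞`, because every
generator `1_{τ ≤ s}`, `s ≤ t`, vanishes on `S`. For `B = {T < τ} ⊆ S` this gives the key lemma
of reduced-form credit risk, `E[1_B | 𝒢^X_∞ ⊔ 𝒢^{R^i}_t] = 1_S · E[1_B | 𝒢^X_∞] / E[1_S | 𝒢^X_∞]`,
and the doubly-stochastic hypothesis turns the quotient into
`exp(-∫_0^T λ) / exp(-∫_0^t λ) = exp(-∫_t^T λ)`. The last step needs `u ↦ λ(u, X_u)` to be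
integrable on `(0, T]` almost surely: where it is not, the integrals up to every horizon `s ≥ T`
take the junk value `0`, so the conditional survival probability is `1`, which `P(τ > s) → 0`
rules out.
-/

open MeasureTheory Set Filter Topology

section TraceCondExp

variable {Ω : Type*} {m G : MeasurableSpace Ω} [mΩ : MeasurableSpace Ω] {μ : Measure Ω}
  {S B : Set Ω}

omit mΩ in
lemma exists_inter_eq_of_comap_subtypeVal_le (htrace : G.comap ((↑) : S → Ω) ≤ m.comap (↑))
    {E : Set Ω} (hE : MeasurableSet[G] E) : ∃ A, MeasurableSet[m] A ∧ S ∩ E = S ∩ A := by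
  obtain ⟨A, hA, hAE⟩ := htrace _ ⟨E, hE, rfl⟩
  exact ⟨A, hA, (Subtype.preimage_coe_eq_preimage_coe_iff.mp hAE).symm⟩

lemma setIntegral_indicator_congr_of_inter_eq {E A : Set Ω} (hS : MeasurableSet S)
    (h : S ∩ E = S ∩ A) (f : Ω → ℝ) :
    ∫ x in E, S.indicator f x ∂μ = ∫ x in A, S.indicator f x ∂μ := by
  rw [setIntegral_indicator hS, setIntegral_indicator hS, inter_comm, h, inter_comm]

lemma stronglyMeasurable_condExp_div {f g : Ω → ℝ} :
    StronglyMeasurable[m] (μ[f | m] / μ[g | m]) :=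
  (stronglyMeasurable_condExp.measurable.div
    stronglyMeasurable_condExp.measurable).stronglyMeasurable

variable [IsFiniteMeasure μ]

lemma integrable_indicator_one (hS : MeasurableSet S) : Integrable (S.indicator (1 : Ω → ℝ)) μ :=
  (integrable_const 1).indicator hS

lemma ae_condExp_indicator_mem_Icc (hB : MeasurableSet B) (hS : MeasurableSet S) (hBS : B ⊆ S) :
    ∀ᵐ ω ∂μ, μ[B.indicator (1 : Ω → ℝ) | m] ω ∈ Icc 0 (μ[S.indicator (1 : Ω → ℝ) | m] ω) := by
  have hind_nonneg : 0 ≤ᵐ[μ] B.indicator (1 : Ω → ℝ) :=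
    .of_forall (indicator_nonneg fun _ _ => zero_le_one)
  filter_upwards [condExp_nonneg (m := m) hind_nonneg,
    condExp_mono (m := m) (integrable_indicator_one hB) (integrable_indicator_one hS)
      (.of_forall (indicator_le_indicator_of_subset hBS fun _ => zero_le_one))]
    with ω hnonneg hle
  exact ⟨hnonneg, hle⟩

lemma integrable_condExp_indicator_div (hm : m ≤ mΩ) (hB : MeasurableSet B)
    (hS : MeasurableSet S) (hBS : B ⊆ S) :
    Integrable (μ[B.indicator (1 : Ω → ℝ) | m] / μ[S.indicator 1 | m]) μ := by
  refine .of_bound (stronglyMeasurable_condExp_div.mono hm).aestronglyMeasurable 1 ?_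
  filter_upwards [ae_condExp_indicator_mem_Icc (m := m) (μ := μ) hB hS hBS] with ω h
  have hb := h.1.trans h.2
  rw [Pi.div_apply, Real.norm_eq_abs, abs_of_nonneg (div_nonneg h.1 hb)]
  exact div_le_one_of_le₀ h.2 hb

lemma setIntegral_indicator_condExp_div (hm : m ≤ mΩ) (hB : MeasurableSet B)
    (hS : MeasurableSet S) (hBS : B ⊆ S) {A : Set Ω} (hA : MeasurableSet[m] A) :
    ∫ ω in A, S.indicator (μ[B.indicator 1 | m] / μ[S.indicator 1 | m]) ω ∂μ
      = ∫ ω in A, B.indicator (1 : Ω → ℝ) ω ∂μ := by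
  set a := μ[B.indicator (1 : Ω → ℝ) | m]
  set b := μ[S.indicator (1 : Ω → ℝ) | m]
  have hmul : S.indicator (a / b) = a / b * S.indicator 1 := by
    ext ω
    by_cases hω : ω ∈ S <;> simp [hω]
  have hr_int : Integrable (a / b * S.indicator 1) μ :=
    hmul ▸ (integrable_condExp_indicator_div hm hB hS hBS).indicator hS
  calc ∫ ω in A, S.indicator (a / b) ω ∂μ = ∫ ω in A, μ[a / b * S.indicator 1 | m] ω ∂μ := by
        rw [hmul, setIntegral_condExp hm hr_int hA]
    _ = ∫ ω in A, (a / b * b : Ω → ℝ) ω ∂μ := setIntegral_congr_ae (hm A hA) <| by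
        filter_upwards [condExp_mul_of_stronglyMeasurable_left stronglyMeasurable_condExp_div
          hr_int (integrable_indicator_one hS)] with ω h _
        exact h
    _ = ∫ ω in A, a ω ∂μ := setIntegral_congr_ae (hm A hA) <| by
        filter_upwards [ae_condExp_indicator_mem_Icc (m := m) (μ := μ) hB hS hBS] with ω h _
        exact div_mul_cancel_of_imp fun hb => le_antisymm (hb ▸ h.2) h.1
    _ = ∫ ω in A, B.indicator (1 : Ω → ℝ) ω ∂μ :=
        setIntegral_condExp hm (integrable_indicator_one hB) hA

theorem condExp_indicator_eq_indicator_condExp_div (hmG : m ≤ G) (hG : G ≤ mΩ)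
    (hS : MeasurableSet[G] S) (hB : MeasurableSet B) (hBS : B ⊆ S)
    (htrace : G.comap ((↑) : S → Ω) ≤ m.comap (↑)) :
    μ[B.indicator (1 : Ω → ℝ) | G]
      =ᵐ[μ] S.indicator (μ[B.indicator 1 | m] / μ[S.indicator 1 | m]) := by
  have hS₀ : MeasurableSet S := hG S hS
  have hm : m ≤ mΩ := hmG.trans hG
  refine (ae_eq_condExp_of_forall_setIntegral_eq hG (integrable_indicator_one hB)
    (fun _ _ _ => ((integrable_condExp_indicator_div hm hB hS₀ hBS).indicator hS₀).integrableOn)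
    (fun E hE _ => ?_)
    ((stronglyMeasurable_condExp_div.mono hmG).indicator hS).aestronglyMeasurable).symm
  obtain ⟨A, hA, hEA⟩ := exists_inter_eq_of_comap_subtypeVal_le htrace hE
  have hB_ind : S.indicator (B.indicator (1 : Ω → ℝ)) = B.indicator 1 := by
    rw [indicator_indicator, inter_eq_right.mpr hBS]
  rw [setIntegral_indicator_congr_of_inter_eq hS₀ hEA, ← hB_ind,
    setIntegral_indicator_congr_of_inter_eq hS₀ hEA, hB_ind,
    setIntegral_indicator_condExp_div hm hB hS₀ hBS hA]

end TraceCondExp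

lemma exp_neg_setIntegral_Ioc_div {φ : ℝ → ℝ} {t T : ℝ} (ht : 0 ≤ t) (htT : t ≤ T)
    (hφ : IntegrableOn φ (Ioc 0 T)) :
    Real.exp (-∫ u in Ioc 0 T, φ u) / Real.exp (-∫ u in Ioc 0 t, φ u)
      = Real.exp (-∫ u in Ioc t T, φ u) := by
  rw [← Ioc_union_Ioc_eq_Ioc ht htT, setIntegral_union (Ioc_disjoint_Ioc_of_le le_rfl)
    measurableSet_Ioc (hφ.mono_set (Ioc_subset_Ioc_right htT))
    (hφ.mono_set (Ioc_subset_Ioc_left ht)), ← Real.exp_sub]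
  congr 1
  ring

section DeathIndicator

variable {Ω : Type*} {τ : Ω → ℝ} {t : ℝ}

/-- The paper's `𝒢^R_t`. -/
noncomputable abbrev deathIndicatorSigma (τ : Ω → ℝ) (t : ℝ) : MeasurableSpace Ω :=
  ⨆ (s : ℝ) (_ : 0 ≤ s) (_ : s ≤ t),
    MeasurableSpace.comap (fun ω => if τ ω ≤ s then (1 : ℝ) else 0) inferInstance

lemma indicator_setOf_lt_one (s : ℝ) :
    {ω | s < τ ω}.indicator (1 : Ω → ℝ) = fun ω => if s < τ ω then 1 else 0 := by
  ext ω
  simp [indicator_apply]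

lemma deathIndicatorSigma_le [mΩ : MeasurableSpace Ω] (hτ : Measurable τ) :
    deathIndicatorSigma τ t ≤ mΩ :=
  iSup₂_le fun _ _ => iSup_le fun _ =>
    (measurable_const.ite (measurableSet_le hτ measurable_const) measurable_const).comap_le

lemma measurableSet_deathIndicatorSigma (ht : 0 ≤ t) :
    MeasurableSet[deathIndicatorSigma τ t] {ω | t < τ ω} := by
  have hle : MeasurableSpace.comap (fun ω => if τ ω ≤ t then (1 : ℝ) else 0) inferInstance
      ≤ deathIndicatorSigma τ t := le_iSup₂_of_le t ht (le_iSup_of_le le_rfl le_rfl)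
  refine hle _ ⟨{0}, measurableSet_singleton 0, ?_⟩
  ext ω
  simp [not_le]

lemma comap_subtypeVal_sup_deathIndicatorSigma (m : MeasurableSpace Ω) :
    (m ⊔ deathIndicatorSigma τ t).comap ((↑) : {ω | t < τ ω} → Ω) = m.comap (↑) := by
  have hzero : ∀ s ≤ t, (fun ω => if τ ω ≤ s then (1 : ℝ) else 0) ∘ ((↑) : {ω | t < τ ω} → Ω)
      = fun _ => 0 := fun s hst => by
    ext ω
    simp [not_le.mpr (hst.trans_lt ω.2)]
  simp only [deathIndicatorSigma, MeasurableSpace.comap_sup, MeasurableSpace.comap_iSup,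
    MeasurableSpace.comap_comp]
  refine sup_eq_left.mpr (iSup₂_le fun s _ => iSup_le fun hst => ?_)
  rw [hzero s hst, MeasurableSpace.comap_const]
  exact bot_le

end DeathIndicator

section Survival

variable {Ω : Type*} {m : MeasurableSpace Ω} [mΩ : MeasurableSpace Ω] {μ : Measure Ω}

lemma condExp_indicator_lt_of_condExp_prod {ι : Type*} [Fintype ι] [DecidableEq ι]
    {τ : ι → Ω → ℝ} (hτ_pos : ∀ j ω, 0 < τ j ω) {Λ : ℝ → Ω → ℝ} (hΛ : ∀ ω, Λ 0 ω = 0)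
    (hDS : ∀ t : ι → ℝ, (∀ j, 0 ≤ t j) →
      μ[(fun ω => ∏ j, if t j < τ j ω then (1 : ℝ) else 0) | m]
        =ᵐ[μ] fun ω => ∏ j, Real.exp (-Λ (t j) ω))
    (i : ι) {s : ℝ} (hs : 0 ≤ s) :
    μ[{ω | s < τ i ω}.indicator 1 | m] =ᵐ[μ] fun ω => Real.exp (-Λ s ω) := by
  have h := hDS (Pi.single i s) fun j => by by_cases hj : j = i <;> simp [hj, hs]
  have hlhs : (fun ω => ∏ j, if (Pi.single i s : ι → ℝ) j < τ j ω then (1 : ℝ) else 0)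
      = {ω | s < τ i ω}.indicator 1 := by
    ext ω
    rw [Fintype.prod_eq_single i fun j hj => by simp [hj, hτ_pos j ω]]
    simp [indicator_apply]
  have hrhs : (fun ω => ∏ j, Real.exp (-Λ ((Pi.single i s : ι → ℝ) j) ω))
      = fun ω => Real.exp (-Λ s ω) := by
    ext ω
    rw [Fintype.prod_eq_single i fun j hj => by simp [hj, hΛ]]
    simp
  rwa [hlhs, hrhs] at h

variable {τ : Ω → ℝ} [IsFiniteMeasure μ]

lemma tendsto_measure_lt_atTop (hτ : Measurable τ) :
    Tendsto (fun s : ℝ => μ {ω | s < τ ω}) atTop (𝓝 0) := by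
  have h := tendsto_measure_iInter_atTop (μ := μ) (s := fun s : ℝ => {ω | s < τ ω})
    (fun _ => (measurableSet_lt measurable_const hτ).nullMeasurableSet)
    (fun _ _ hss' _ hω => hss'.trans_lt hω) ⟨0, measure_ne_top μ _⟩
  have hempty : ⋂ s : ℝ, {ω | s < τ ω} = ∅ :=
    eq_empty_of_forall_notMem fun ω hω => lt_irrefl (τ ω) (mem_iInter.mp hω (τ ω) : τ ω < τ ω)
  rwa [hempty, measure_empty] at h

lemma ae_integrableOn_Ioc_of_condExp_survival (hm : m ≤ mΩ) (hτ : Measurable τ)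
    {φ : Ω → ℝ → ℝ} (hsurv : ∀ s, 0 ≤ s → μ[{ω | s < τ ω}.indicator (1 : Ω → ℝ) | m]
      =ᵐ[μ] fun ω => Real.exp (-∫ u in Ioc 0 s, φ ω u)) {T : ℝ} (hT : 0 ≤ T) :
    ∀ᵐ ω ∂μ, IntegrableOn (φ ω) (Ioc 0 T) := by
  set N := {ω | ¬ IntegrableOn (φ ω) (Ioc 0 T)}
  have hbound : ∀ s, T ≤ s → μ N ≤ μ {ω | s < τ ω} := by
    intro s hs
    have hsurv_s := hsurv s (hT.trans hs)
    have hN : N ⊆ {ω | 1 ≤ Real.exp (-∫ u in Ioc 0 s, φ ω u)} := fun ω hω => by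
      have hnot : ¬ IntegrableOn (φ ω) (Ioc 0 s) :=
        fun h => hω (h.mono_set (Ioc_subset_Ioc_right hs))
      rw [mem_ofPred_eq, integral_undef hnot, neg_zero, Real.exp_zero]
    have hmarkov := mul_meas_ge_le_integral_of_nonneg
      (.of_forall fun ω => (Real.exp_pos _).le) (integrable_condExp.congr hsurv_s) 1
    rw [one_mul, integral_congr_ae hsurv_s.symm, integral_condExp hm,
      integral_indicator_one (measurableSet_lt measurable_const hτ)] at hmarkov
    exact (measure_mono hN).trans
      ((ENNReal.toReal_le_toReal (measure_ne_top _ _) (measure_ne_top _ _)).mp hmarkov)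
  exact ae_iff.mpr (le_zero_iff.mp
    (ge_of_tendsto (tendsto_measure_lt_atTop hτ) ((eventually_ge_atTop T).mono hbound)))

end Survival

theorem stmt_3_general {Ω : Type*} (GX : MeasurableSpace Ω) (GRi : ℝ → MeasurableSpace Ω)
    [m0 : MeasurableSpace Ω] (μ : Measure Ω) [IsProbabilityMeasure μ]
    (X : ℝ → Ω → ℝ) (hX : Measurable (Function.uncurry X))
    (lam : ℝ → ℝ → ℝ)
    (la : ℕ)
    (τ : Fin la → Ω → ℝ) (hτ_meas : ∀ i, Measurable (τ i))
    (hτ_pos : ∀ i ω, 0 < τ i ω)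
    (hGX : GX = ⨆ (u : ℝ) (_ : 0 ≤ u), MeasurableSpace.comap (X u) inferInstance)
    (hDS : ∀ t : Fin la → ℝ, (∀ i, 0 ≤ t i) →
      μ[(fun ω => ∏ i, if t i < τ i ω then (1:ℝ) else 0) | GX]
        =ᵐ[μ] fun ω => ∏ i, Real.exp (-∫ s in Ioc (0:ℝ) (t i), lam s (X s ω)))
    (i : Fin la)
    (hGRi : ∀ t : ℝ, GRi t = ⨆ (s : ℝ) (_ : 0 ≤ s) (_ : s ≤ t),
      MeasurableSpace.comap (fun ω => if τ i ω ≤ s then (1:ℝ) else 0) inferInstance)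
    (t T : ℝ) (ht : 0 ≤ t) (htT : t ≤ T) :
    μ[(fun ω => if T < τ i ω then (1:ℝ) else 0) | GX ⊔ GRi t]
      =ᵐ[μ] fun ω => (if t < τ i ω then (1:ℝ) else 0)
        * Real.exp (-∫ s in Ioc t T, lam s (X s ω)) := by
  have hGX_le : GX ≤ m0 := hGX ▸ iSup₂_le fun u _ => hX.of_uncurry_left.comap_le
  have hGRi_t : GRi t = deathIndicatorSigma (τ i) t := hGRi t
  have hsurv := fun s (hs : 0 ≤ s) => condExp_indicator_lt_of_condExp_prod hτ_pos
    (Λ := fun s ω => ∫ u in Ioc 0 s, lam u (X u ω)) (by simp) hDS i hs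
  rw [hGRi_t, ← indicator_setOf_lt_one]
  filter_upwards [condExp_indicator_eq_indicator_condExp_div le_sup_left
      (sup_le hGX_le (deathIndicatorSigma_le (hτ_meas i)))
      (le_sup_right (a := GX) _ (measurableSet_deathIndicatorSigma ht))
      (measurableSet_lt measurable_const (hτ_meas i)) (fun ω hω => htT.trans_lt hω)
      (comap_subtypeVal_sup_deathIndicatorSigma GX).le,
    hsurv T (ht.trans htT), hsurv t ht,
    ae_integrableOn_Ioc_of_condExp_survival hGX_le (hτ_meas i) hsurv (ht.trans htT)]
    with ω hcond hsurvT hsurvt hint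
  rw [hcond, indicator_apply, Pi.div_apply, hsurvT, hsurvt, exp_neg_setIntegral_Ioc_div ht htT hint]
  by_cases h : t < τ i ω <;> simp [h]

/-- For doubly-stochastic lifetimes, for each `i` and `0 ≤ t ≤ T`,
`E[1_{τ i > T} | 𝒢^X_∞ ⊔ 𝒢^{R^i}_t] = 1_{τ i > t} exp(-∫_t^T λ(s, X_s) ds)` a.s.,
where `𝒢^{R^i}_t` is generated by the single-life death-indicator process up to time `t`. -/
theorem stmt_3 {Ω : Type*} (GX : MeasurableSpace Ω) (GRi : ℝ → MeasurableSpace Ω)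
    [m0 : MeasurableSpace Ω] (μ : Measure Ω) [IsProbabilityMeasure μ]
    (X : ℝ → Ω → ℝ) (hX : Measurable (Function.uncurry X))
    (lam : ℝ → ℝ → ℝ) (hlam : Measurable (Function.uncurry lam))
    (hlam_pos : ∀ t x, 0 < lam t x)
    (hlam_int : ∀ Tstar : ℝ, 0 < Tstar →
      Integrable (fun ω => ∫ u in Ioc (0:ℝ) Tstar, lam u (X u ω)) μ)
    (la : ℕ) (hla : 1 ≤ la)
    (τ : Fin la → Ω → ℝ) (hτ_meas : ∀ i, Measurable (τ i))
    (hτ_pos : ∀ i ω, 0 < τ i ω)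
    (hGX : GX = ⨆ (u : ℝ) (_ : 0 ≤ u), MeasurableSpace.comap (X u) inferInstance)
    (hDS : ∀ t : Fin la → ℝ, (∀ i, 0 ≤ t i) →
      μ[(fun ω => ∏ i, if t i < τ i ω then (1:ℝ) else 0) | GX]
        =ᵐ[μ] fun ω => ∏ i, Real.exp (-∫ s in Ioc (0:ℝ) (t i), lam s (X s ω)))
    (i : Fin la)
    (hGRi : ∀ t : ℝ, GRi t = ⨆ (s : ℝ) (_ : 0 ≤ s) (_ : s ≤ t),
      MeasurableSpace.comap (fun ω => if τ i ω ≤ s then (1:ℝ) else 0) inferInstance)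
    (t T : ℝ) (ht : 0 ≤ t) (htT : t ≤ T) :
    μ[(fun ω => if T < τ i ω then (1:ℝ) else 0) | GX ⊔ GRi t]
      =ᵐ[μ] fun ω => (if t < τ i ω then (1:ℝ) else 0)
        * Real.exp (-∫ s in Ioc t T, lam s (X s ω)) :=
  stmt_3_general GX GRi (m0 := m0) μ X hX lam la τ hτ_meas hτ_pos hGX hDS i hGRi t T ht htT
end

section
/- For every 0 ≤ t ≤ T, one has P-almost surely E[l_a − N_T | 𝒢^N_t] = (l_a − N_t) · E[exp(−∫_t^T λ(s, X_s) ds) | 𝒢^N_t]. Equivalently, the process B_t := E[l_a − N_T | 𝒢^N_t] equals (l_a − N_t) · ₍T−t₎p̂_t, where ₍T−t₎p̂_t := E[exp(−∫_t^T λ(s, X_s) ds) | 𝒢^N_t] is the 𝒢^N-projection of the survival process. -/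
/-!
Put `Y = exp (-∫ₜᵀ λ(s, X_s) ds)` and `Λ(r) = ∫₀ʳ λ(s, X_s) ds`. Since `τ > 0`, the survival events
`{τ > b}` with `0 ≤ b ≤ t` form a π-system containing `Ω`, and they generate a σ-algebra containing
`𝒢^N_t`. As `l_a - N_t` is `𝒢^N_t`-measurable and can be pulled out of the conditional expectation,
it suffices to show `E[l_a - N_T; τ > b] = E[(l_a - N_t) Y; τ > b]` for these `b`.

Write `l_a - N_r = ∑ᵢ 1{τᵢ > r}` and `{τ > b} ∩ {τᵢ > r} = {τ > b[i ↦ r]}`. The doubly stochastic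
assumption turns both sides into `E[∏ⱼ exp(-Λ(b'ⱼ))]`, with the `𝒢^X`-measurable weight `Y` on the
right, and the two agree because `Λ(T) = Λ(t) + ∫ₜᵀ λ` a.s. Two points need care: `Y` is only a.s.
equal to a `𝒢^X`-measurable function (an `L²` argument, as `Y` is built from a parametric integral of
`𝒢^X`-measurable sections), and the additivity of `Λ` needs the paths of `λ(·, X)` to be a.s.
locally integrable, which the doubly stochastic assumption itself forces.
-/

open MeasureTheory Set Filter Function Topology

theorem integral_eq_toReal_iSup_integral_min {β : Type*} [MeasurableSpace β] {ν : Measure β}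
    [IsFiniteMeasure ν] {f : β → ℝ} (hf : Measurable f) (h0 : 0 ≤ f) :
    ∫ s, f s ∂ν = (⨆ n : ℕ, ENNReal.ofReal (∫ s, min (f s) n ∂ν)).toReal := by
  have hmin : ∀ n : ℕ, ENNReal.ofReal (∫ s, min (f s) n ∂ν)
      = ∫⁻ s, ENNReal.ofReal (min (f s) n) ∂ν := fun n =>
    ofReal_integral_eq_lintegral_ofReal
      (.of_bound (hf.min measurable_const).aestronglyMeasurable n (ae_of_all _ fun s => by
        rw [Real.norm_of_nonneg (le_min (h0 s) n.cast_nonneg)]; exact min_le_right _ _))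
      (ae_of_all _ fun s => le_min (h0 s) n.cast_nonneg)
  rw [integral_eq_lintegral_of_nonneg_ae (ae_of_all _ h0) hf.aestronglyMeasurable]
  simp_rw [hmin]
  rw [← lintegral_iSup (fun n => (hf.min measurable_const).ennreal_ofReal)
    (fun n k hnk s => ENNReal.ofReal_le_ofReal (min_le_min_left _ (by exact_mod_cast hnk)))]
  congr 1
  refine lintegral_congr fun s => le_antisymm ?_
    (iSup_le fun n => ENNReal.ofReal_le_ofReal (min_le_left _ _))
  obtain ⟨n, hn⟩ := exists_nat_ge (f s)
  exact le_iSup_of_le n (by rw [min_eq_left hn])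

section ConditionalExpectation

variable {Ω : Type*} {m m0 : MeasurableSpace Ω} {μ : Measure[m0] Ω}

theorem integral_mul_condExp_of_aestronglyMeasurable (hm : m ≤ m0) [SigmaFinite (μ.trim hm)]
    {Y P : Ω → ℝ} (hY : AEStronglyMeasurable[m] Y μ) (hYP : Integrable (Y * P) μ)
    (hP : Integrable P μ) :
    ∫ ω, Y ω * (μ[P|m]) ω ∂μ = ∫ ω, Y ω * P ω ∂μ :=
  calc ∫ ω, Y ω * (μ[P|m]) ω ∂μ = ∫ ω, (μ[Y * P|m]) ω ∂μ :=
        integral_congr_ae (condExp_mul_of_aestronglyMeasurable_left hY hYP hP).symm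
    _ = ∫ ω, Y ω * P ω ∂μ := integral_condExp hm

variable [IsFiniteMeasure μ]

theorem integral_mul_sub_condExp_eq_zero (hm : m ≤ m0) {Y G : Ω → ℝ}
    (hYm : AEStronglyMeasurable[m] Y μ) (hY : Integrable Y μ) (hG : AEStronglyMeasurable G μ)
    {C : ℝ} (hGC : ∀ᵐ ω ∂μ, |G ω| ≤ C) :
    ∫ ω, Y ω * (G ω - (μ[G|m]) ω) ∂μ = 0 := by
  have hYG : Integrable (fun ω => Y ω * G ω) μ := hY.mul_bdd hG hGC
  have hYW : Integrable (fun ω => Y ω * (μ[G|m]) ω) μ :=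
    hY.mul_bdd (stronglyMeasurable_condExp.mono hm).aestronglyMeasurable
      (ae_bdd_abs_condExp_of_ae_bdd_abs hGC)
  simp_rw [mul_sub]
  rw [integral_sub hYG hYW, integral_mul_condExp_of_aestronglyMeasurable hm hYm hYG
    (.of_bound hG C hGC), sub_self]

theorem ae_eq_condExp_of_integral_mul_sub_condExp_eq_zero (hm : m ≤ m0) {G : Ω → ℝ}
    (hG : AEStronglyMeasurable G μ) {C : ℝ} (hGC : ∀ᵐ ω ∂μ, |G ω| ≤ C)
    (h : ∫ ω, G ω * (G ω - (μ[G|m]) ω) ∂μ = 0) : G =ᵐ[μ] μ[G|m] := by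
  set W := μ[G|m]
  have hWm : AEStronglyMeasurable W μ := (stronglyMeasurable_condExp.mono hm).aestronglyMeasurable
  have hZ : Integrable (G - W) μ := (Integrable.of_bound hG C hGC).sub integrable_condExp
  have hGZ : Integrable (fun ω => G ω * (G ω - W ω)) μ := hZ.bdd_mul hG hGC
  have hWZ : Integrable (fun ω => W ω * (G ω - W ω)) μ :=
    hZ.bdd_mul hWm (ae_bdd_abs_condExp_of_ae_bdd_abs hGC)
  have hsq : (fun ω => (G ω - W ω) ^ 2) = fun ω => G ω * (G ω - W ω) - W ω * (G ω - W ω) := by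
    ext ω; ring
  have hsq_zero : (fun ω => (G ω - W ω) ^ 2) =ᵐ[μ] 0 := by
    refine (integral_eq_zero_iff_of_nonneg (fun ω => sq_nonneg _) (hsq ▸ hGZ.sub hWZ)).1 ?_
    rw [hsq, integral_sub hGZ hWZ, h, integral_mul_sub_condExp_eq_zero hm
      stronglyMeasurable_condExp.aestronglyMeasurable integrable_condExp hG hGC, sub_self]
  filter_upwards [hsq_zero] with ω hω
  exact sub_eq_zero.1 (pow_eq_zero_iff two_ne_zero |>.1 hω)

/-- By Fubini, `∫ G (G - E[G | m])` is an integral over `s` of `∫ φ s (G - E[G | m])`, and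
these vanish because each section `φ s` is `m`-measurable. -/
theorem aestronglyMeasurable_integral_of_abs_le {β : Type*} [MeasurableSpace β] {ν : Measure β}
    [IsFiniteMeasure ν] (hm : m ≤ m0) {φ : β → Ω → ℝ} (hφ : Measurable (uncurry φ)) {C : ℝ}
    (hC : ∀ s ω, |φ s ω| ≤ C) (hsec : ∀ᵐ s ∂ν, Measurable[m] (φ s)) :
    AEStronglyMeasurable[m] (fun ω => ∫ s, φ s ω ∂ν) μ := by
  set G : Ω → ℝ := fun ω => ∫ s, φ s ω ∂ν
  set W := μ[G|m]
  have hGm : StronglyMeasurable G := hφ.stronglyMeasurable.integral_prod_left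
  have hGC : ∀ ω, |G ω| ≤ C * ν.real univ := fun ω =>
    norm_integral_le_of_norm_le_const (f := (φ · ω)) (ae_of_all _ (hC · ω))
  have hZ : Integrable (G - W) μ :=
    (Integrable.of_bound hGm.aestronglyMeasurable _ (ae_of_all _ hGC)).sub integrable_condExp
  have hint : Integrable (uncurry fun ω s => φ s ω * (G - W) ω) (μ.prod ν) :=
    (hZ.comp_fst ν).bdd_mul (hφ.comp measurable_swap).aestronglyMeasurable
      (ae_of_all _ fun p => hC p.2 p.1)
  refine ⟨W, stronglyMeasurable_condExp, ae_eq_condExp_of_integral_mul_sub_condExp_eq_zero hm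
    hGm.aestronglyMeasurable (ae_of_all _ hGC) ?_⟩
  calc ∫ ω, G ω * (G - W) ω ∂μ = ∫ ω, ∫ s, φ s ω * (G - W) ω ∂ν ∂μ := by
        simp_rw [G, integral_mul_const]
    _ = ∫ s, ∫ ω, φ s ω * (G - W) ω ∂μ ∂ν := integral_integral_swap hint
    _ = 0 := integral_eq_zero_of_ae <| hsec.mono fun s hs =>
        integral_mul_sub_condExp_eq_zero hm hs.aestronglyMeasurable
          (.of_bound (hφ.comp measurable_prodMk_left).aestronglyMeasurable C (ae_of_all _ (hC s)))
          hGm.aestronglyMeasurable (ae_of_all _ hGC)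

theorem aestronglyMeasurable_integral_of_nonneg {β : Type*} [MeasurableSpace β] {ν : Measure β}
    [IsFiniteMeasure ν] (hm : m ≤ m0) {φ : β → Ω → ℝ} (hφ : Measurable (uncurry φ))
    (h0 : ∀ s ω, 0 ≤ φ s ω) (hsec : ∀ᵐ s ∂ν, Measurable[m] (φ s)) :
    AEStronglyMeasurable[m] (fun ω => ∫ s, φ s ω ∂ν) μ := by
  have htrunc (n : ℕ) : AEStronglyMeasurable[m] (fun ω => ∫ s, min (φ s ω) n ∂ν) μ :=
    aestronglyMeasurable_integral_of_abs_le hm (hφ.min measurable_const)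
      (fun s ω => by rw [abs_of_nonneg (le_min (h0 s ω) n.cast_nonneg)]; exact min_le_right _ _)
      (hsec.mono fun s hs => hs.min measurable_const)
  choose g hg hφg using htrunc
  refine ⟨fun ω => (⨆ n, ENNReal.ofReal (g n ω)).toReal,
    (Measurable.iSup fun n => (hg n).measurable.ennreal_ofReal).ennreal_toReal.stronglyMeasurable,
    ?_⟩
  filter_upwards [ae_all_iff.2 hφg] with ω hω
  rw [integral_eq_toReal_iSup_integral_min (f := (φ · ω)) (hφ.comp measurable_prodMk_right)
    (h0 · ω)]
  simp_rw [hω]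

end ConditionalExpectation

theorem setIntegral_eq_of_isPiSystem {Ω E : Type*} [m0 : MeasurableSpace Ω] {μ : Measure Ω}
    [NormedAddCommGroup E] [NormedSpace ℝ E] {f g : Ω → E} {S : Set (Set Ω)}
    (hS : IsPiSystem S) (hSm : ∀ s ∈ S, MeasurableSet s) (hf : Integrable f μ)
    (hg : Integrable g μ) (huniv : ∫ ω, f ω ∂μ = ∫ ω, g ω ∂μ)
    (h : ∀ s ∈ S, ∫ ω in s, f ω ∂μ = ∫ ω in s, g ω ∂μ) {s : Set Ω}
    (hs : MeasurableSet[MeasurableSpace.generateFrom S] s) :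
    ∫ ω in s, f ω ∂μ = ∫ ω in s, g ω ∂μ := by
  have hle : MeasurableSpace.generateFrom S ≤ m0 := MeasurableSpace.generateFrom_le hSm
  induction s, hs using MeasurableSpace.induction_on_inter rfl hS with
  | empty => simp
  | basic s hs => exact h s hs
  | compl s hs ihs =>
    rw [setIntegral_compl (hle _ hs) hf, setIntegral_compl (hle _ hs) hg, ihs, huniv]
  | iUnion F hdisj hF ihF =>
    rw [integral_iUnion (fun n => hle _ (hF n)) hdisj hf.integrableOn,
      integral_iUnion (fun n => hle _ (hF n)) hdisj hg.integrableOn]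
    exact tsum_congr ihF

theorem tendsto_measure_setOf_natCast_lt {Ω : Type*} [MeasurableSpace Ω] {μ : Measure Ω}
    [IsFiniteMeasure μ] {f : Ω → ℝ} (hf : Measurable f) :
    Tendsto (fun n : ℕ => μ {ω | (n : ℝ) < f ω}) atTop (𝓝 0) := by
  have h := tendsto_measure_iInter_atTop (μ := μ)
    (fun n : ℕ => (measurableSet_lt measurable_const hf).nullMeasurableSet)
    (fun n k hnk ω (hω : (k : ℝ) < f ω) => (Nat.cast_le.2 hnk).trans_lt hω)
    ⟨0, measure_ne_top _ _⟩
  rwa [iInter_eq_empty_iff.2 fun ω => ?_, measure_empty] at h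
  obtain ⟨n, hn⟩ := exists_nat_ge (f ω)
  exact ⟨n, hn.not_gt⟩

section SurvivalSet

variable {Ω ι : Type*} {τ : ι → Ω → ℝ}

def survivalSet (τ : ι → Ω → ℝ) (b : ι → ℝ) : Set Ω := {ω | ∀ i, b i < τ i ω}

theorem survivalSet_zero (hτ0 : ∀ i ω, 0 < τ i ω) : survivalSet τ 0 = univ :=
  eq_univ_of_forall fun ω i => hτ0 i ω

theorem survivalSet_sup (b b' : ι → ℝ) :
    survivalSet τ (b ⊔ b') = survivalSet τ b ∩ survivalSet τ b' := by
  ext ω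
  simp only [survivalSet, Pi.sup_apply, sup_lt_iff, mem_inter_iff, mem_ofPred_eq, forall_and]

theorem survivalSet_inter_setOf_lt [DecidableEq ι] {b : ι → ℝ} {i : ι} {r : ℝ} (h : b i ≤ r) :
    survivalSet τ b ∩ {ω | r < τ i ω} = survivalSet τ (update b i r) := by
  ext ω
  simp only [survivalSet, mem_inter_iff, mem_ofPred_eq]
  refine ⟨fun ⟨hb, hr⟩ j => ?_, fun hu => ⟨fun j => ?_, by simpa using hu i⟩⟩
  · rcases eq_or_ne j i with rfl | hj
    · simpa using hr
    · simpa [hj] using hb j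
  · rcases eq_or_ne j i with rfl | hj
    · exact h.trans_lt (by simpa using hu j)
    · simpa [hj] using hu j

theorem isPiSystem_survivalSet_image_Icc (t : ℝ) :
    IsPiSystem (survivalSet τ '' Icc 0 fun _ => t) := by
  rintro _ ⟨b, hb, rfl⟩ _ ⟨b', hb', rfl⟩ -
  exact ⟨b ⊔ b', ⟨le_sup_of_le_left hb.1, sup_le hb.2 hb'.2⟩, survivalSet_sup b b'⟩

theorem measurableSet_survivalSet [MeasurableSpace Ω] [Countable ι] (hτ : ∀ i, Measurable (τ i))
    (b : ι → ℝ) : MeasurableSet (survivalSet τ b) := by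
  simp only [survivalSet, ofPred_forall]
  exact .iInter fun i => measurableSet_lt measurable_const (hτ i)

end SurvivalSet

section Hazard

variable {Ω ι : Type*} [Fintype ι] {τ : ι → Ω → ℝ} {ρ : ℝ → Ω → ℝ}

/-- `l_a - N_r`: the number of lives still alive at time `r`. -/
noncomputable def numAlive (τ : ι → Ω → ℝ) (r : ℝ) (ω : Ω) : ℝ :=
  ∑ i, {ω | r < τ i ω}.indicator 1 ω

/-- `P(τ > b | 𝒢^X)` under the doubly stochastic assumption with hazard rate `ρ`. -/
noncomputable def condSurvival (ρ : ℝ → Ω → ℝ) (b : ι → ℝ) (ω : Ω) : ℝ :=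
  ∏ i, Real.exp (-∫ s in Ioc 0 (b i), ρ s ω)

def IsDoublyStochastic (m : MeasurableSpace Ω) {m0 : MeasurableSpace Ω} (μ : Measure[m0] Ω)
    (τ : ι → Ω → ℝ) (ρ : ℝ → Ω → ℝ) : Prop :=
  ∀ b : ι → ℝ, (∀ i, 0 ≤ b i) →
    μ[fun ω => ∏ i, if b i < τ i ω then (1 : ℝ) else 0 | m] =ᵐ[μ] condSurvival ρ b

theorem prod_ite_lt_eq_indicator_survivalSet (b : ι → ℝ) (ω : Ω) :
    (∏ i, if b i < τ i ω then (1 : ℝ) else 0) = (survivalSet τ b).indicator 1 ω := by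
  simp [Fintype.prod_boole, indicator_apply, survivalSet]

theorem card_sub_sum_ite_le_eq_numAlive (r : ℝ) (ω : Ω) :
    (Fintype.card ι : ℝ) - ∑ i, (if τ i ω ≤ r then 1 else 0) = numAlive τ r ω := by
  have hsplit (i : ι) :
      {ω | r < τ i ω}.indicator (1 : Ω → ℝ) ω + (if τ i ω ≤ r then 1 else 0) = 1 := by
    by_cases h : τ i ω ≤ r
    · simp [h, not_lt.2 h]
    · simp [h, lt_of_not_ge h]
  rw [numAlive, sub_eq_iff_eq_add, ← Finset.sum_add_distrib]
  simp [hsplit]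

theorem abs_numAlive_le (r : ℝ) (ω : Ω) : |numAlive τ r ω| ≤ Fintype.card ι := by
  rw [abs_of_nonneg (Finset.sum_nonneg fun i _ => indicator_nonneg (fun _ _ => zero_le_one) _)]
  calc numAlive τ r ω ≤ ∑ _i : ι, (1 : ℝ) :=
        Finset.sum_le_sum fun i _ => indicator_le_self' (fun _ _ => zero_le_one) ω
    _ = Fintype.card ι := by simp

theorem measurable_numAlive_generateFrom (hτ0 : ∀ i ω, 0 < τ i ω) {s t : ℝ} (hs : 0 ≤ s)
    (hst : s ≤ t) :
    Measurable[MeasurableSpace.generateFrom (survivalSet τ '' Icc 0 fun _ => t)]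
      (numAlive τ s) := by
  classical
  -- `measurable_one` takes the σ-algebra on `Ω` as an instance
  let _ : MeasurableSpace Ω := MeasurableSpace.generateFrom (survivalSet τ '' Icc 0 fun _ => t)
  refine Finset.measurable_sum _ fun i _ => measurable_one.indicator
    (MeasurableSpace.measurableSet_generateFrom ⟨update 0 i s, ⟨fun j => ?_, fun j => ?_⟩, ?_⟩)
  · rw [update_apply]; split_ifs <;> simp [hs]
  · rw [update_apply]; split_ifs <;> simp [hst, hs.trans hst]
  · rw [← survivalSet_inter_setOf_lt (b := (0 : ι → ℝ)) hs, survivalSet_zero hτ0, univ_inter]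

theorem condSurvival_nonneg (b : ι → ℝ) (ω : Ω) : 0 ≤ condSurvival ρ b ω :=
  Finset.prod_nonneg fun _ _ => (Real.exp_pos _).le

theorem exp_neg_integral_le_one (hρ0 : ∀ s ω, 0 ≤ ρ s ω) (a b : ℝ) (ω : Ω) :
    Real.exp (-∫ s in Ioc a b, ρ s ω) ≤ 1 :=
  Real.exp_le_one_iff.2 (neg_nonpos.2 (integral_nonneg (hρ0 · ω)))

theorem condSurvival_le_one (hρ0 : ∀ s ω, 0 ≤ ρ s ω) (b : ι → ℝ) (ω : Ω) :
    condSurvival ρ b ω ≤ 1 :=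
  Finset.prod_le_one (fun _ _ => (Real.exp_pos _).le)
    fun i _ => exp_neg_integral_le_one hρ0 0 (b i) ω

theorem condSurvival_update_of_integral_eq_add [DecidableEq ι] {ω : Ω} {t T : ℝ}
    (h : ∫ s in Ioc 0 T, ρ s ω = (∫ s in Ioc 0 t, ρ s ω) + ∫ s in Ioc t T, ρ s ω)
    (b : ι → ℝ) (i : ι) :
    condSurvival ρ (update b i T) ω
      = Real.exp (-∫ s in Ioc t T, ρ s ω) * condSurvival ρ (update b i t) ω := by
  simp only [condSurvival, ← Finset.mul_prod_erase _ _ (Finset.mem_univ i), update_self, h]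
  have hrest (r : ℝ) : ∏ j ∈ Finset.univ.erase i, Real.exp (-∫ s in Ioc 0 (update b i r j), ρ s ω)
      = ∏ j ∈ Finset.univ.erase i, Real.exp (-∫ s in Ioc 0 (b j), ρ s ω) :=
    Finset.prod_congr rfl fun j hj => by rw [update_of_ne (Finset.ne_of_mem_erase hj)]
  rw [hrest, hrest, neg_add, Real.exp_add]
  ring

variable [MeasurableSpace Ω]

theorem measurable_numAlive (hτ : ∀ i, Measurable (τ i)) (r : ℝ) : Measurable (numAlive τ r) :=
  Finset.measurable_sum _ fun i _ =>
    measurable_one.indicator (measurableSet_lt measurable_const (hτ i))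

theorem setIntegral_numAlive_mul {μ : Measure Ω} (hτ : ∀ i, Measurable (τ i)) (r : ℝ)
    {Y : Ω → ℝ} (hY : Integrable Y μ) (s : Set Ω) :
    ∫ ω in s, numAlive τ r ω * Y ω ∂μ = ∑ i, ∫ ω in s ∩ {ω | r < τ i ω}, Y ω ∂μ := by
  have hA (i : ι) : MeasurableSet {ω | r < τ i ω} := measurableSet_lt measurable_const (hτ i)
  have hpt (ω : Ω) : numAlive τ r ω * Y ω = ∑ i, {ω | r < τ i ω}.indicator Y ω := by
    simp only [numAlive, Finset.sum_mul, indicator_apply, Pi.one_apply, ite_mul, one_mul, zero_mul]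
  simp_rw [hpt]
  rw [integral_finsetSum _ fun i _ => (hY.indicator (hA i)).integrableOn]
  exact Finset.sum_congr rfl fun i _ => setIntegral_indicator (hA i)

theorem measurable_exp_neg_integral (hρ : Measurable (uncurry ρ)) (a b : ℝ) :
    Measurable fun ω => Real.exp (-∫ s in Ioc a b, ρ s ω) :=
  (hρ.stronglyMeasurable.integral_prod_left.measurable.neg).exp

theorem measurable_condSurvival (hρ : Measurable (uncurry ρ)) (b : ι → ℝ) :
    Measurable (condSurvival ρ b) :=
  Finset.measurable_prod _ fun i _ => measurable_exp_neg_integral hρ 0 (b i)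

theorem integrable_exp_neg_integral {μ : Measure Ω} [IsFiniteMeasure μ]
    (hρ : Measurable (uncurry ρ)) (hρ0 : ∀ s ω, 0 ≤ ρ s ω) (a b : ℝ) :
    Integrable (fun ω => Real.exp (-∫ s in Ioc a b, ρ s ω)) μ :=
  .of_bound (measurable_exp_neg_integral hρ a b).aestronglyMeasurable 1 (ae_of_all _ fun ω => by
    rw [Real.norm_of_nonneg (Real.exp_pos _).le]; exact exp_neg_integral_le_one hρ0 a b ω)

theorem integrable_condSurvival {μ : Measure Ω} [IsFiniteMeasure μ] (hρ : Measurable (uncurry ρ))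
    (hρ0 : ∀ s ω, 0 ≤ ρ s ω) (b : ι → ℝ) : Integrable (condSurvival ρ b) μ :=
  .of_bound (measurable_condSurvival hρ b).aestronglyMeasurable 1 (ae_of_all _ fun ω => by
    rw [Real.norm_of_nonneg (condSurvival_nonneg b ω)]; exact condSurvival_le_one hρ0 b ω)

end Hazard

section DoublyStochastic

variable {Ω ι : Type*} [Fintype ι] {m m0 : MeasurableSpace Ω} {μ : Measure[m0] Ω}
  [IsFiniteMeasure μ] {τ : ι → Ω → ℝ} {ρ : ℝ → Ω → ℝ}

theorem setIntegral_survivalSet (hm : m ≤ m0) (hDS : IsDoublyStochastic m μ τ ρ)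
    (hτ : ∀ i, Measurable (τ i)) {b : ι → ℝ} (hb : ∀ i, 0 ≤ b i) {Y : Ω → ℝ}
    (hYm : AEStronglyMeasurable[m] Y μ) (hY : Integrable Y μ) :
    ∫ ω in survivalSet τ b, Y ω ∂μ = ∫ ω, Y ω * condSurvival ρ b ω ∂μ := by
  set P := (survivalSet τ b).indicator (1 : Ω → ℝ)
  have hS := measurableSet_survivalSet hτ b
  have hPm : μ[P|m] =ᵐ[μ] condSurvival ρ b := by
    simpa only [prod_ite_lt_eq_indicator_survivalSet] using hDS b hb
  have hPint : Integrable P μ := (integrable_const 1).indicator hS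
  have hYP : Integrable (Y * P) μ := hY.mul_bdd hPint.aestronglyMeasurable
    (ae_of_all _ fun ω => (norm_indicator_le_norm_self _ ω).trans_eq norm_one)
  calc ∫ ω in survivalSet τ b, Y ω ∂μ = ∫ ω, Y ω * P ω ∂μ := by
        rw [← integral_indicator hS]
        congr with ω
        by_cases hω : ω ∈ survivalSet τ b <;> simp [P, hω]
    _ = ∫ ω, Y ω * (μ[P|m]) ω ∂μ :=
        (integral_mul_condExp_of_aestronglyMeasurable hm hYm hYP hPint).symm
    _ = ∫ ω, Y ω * condSurvival ρ b ω ∂μ :=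
        integral_congr_ae (hPm.mono fun ω h => congrArg (Y ω * ·) h)

/-- On the event where `ρ · ω` is not integrable on `(0, n]`, the Bochner integral takes the
junk value `0`, so the conditional survival probability is `1` there; yet `P(τ i > n) → 0`. -/
theorem ae_integrableOn_of_isDoublyStochastic (hm : m ≤ m0) (hDS : IsDoublyStochastic m μ τ ρ)
    (hτ : ∀ i, Measurable (τ i)) (hρ : Measurable (uncurry ρ)) (hρ0 : ∀ s ω, 0 ≤ ρ s ω)
    (i : ι) (T : ℝ) : ∀ᵐ ω ∂μ, IntegrableOn (ρ · ω) (Ioc 0 T) := by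
  set Bad := {ω | ¬ IntegrableOn (ρ · ω) (Ioc 0 T)}
  have hBad : MeasurableSet Bad :=
    (measurableSet_integrable (f := fun ω s => ρ s ω)
      (hρ.comp measurable_swap).stronglyMeasurable).compl
  have hle (n : ℕ) (hn : T ≤ n) : μ Bad ≤ μ {ω | (n : ℝ) < τ i ω} := by
    set b : ι → ℝ := fun _ => n
    refine (ENNReal.toReal_le_toReal (measure_ne_top _ _) (measure_ne_top _ _)).1 ?_
    calc μ.real Bad = ∫ ω, Bad.indicator 1 ω ∂μ := (integral_indicator_one hBad).symm
      _ ≤ ∫ ω, condSurvival ρ b ω ∂μ := by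
          refine integral_mono ((integrable_const 1).indicator hBad)
            (integrable_condSurvival hρ hρ0 b) fun ω => ?_
          by_cases hω : ω ∈ Bad
          · have : ¬ IntegrableOn (ρ · ω) (Ioc 0 n) :=
              fun h => hω (h.mono_set (Ioc_subset_Ioc_right hn))
            simp [indicator_of_mem hω, condSurvival, b, integral_undef this]
          · simp [indicator_of_notMem hω, condSurvival_nonneg]
      _ = μ.real (survivalSet τ b) := by
          simpa using (setIntegral_survivalSet hm hDS hτ (fun _ => n.cast_nonneg)
            (aestronglyMeasurable_const (b := (1 : ℝ))) (integrable_const 1)).symm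
      _ ≤ μ.real {ω | (n : ℝ) < τ i ω} := measureReal_mono fun ω hω => hω i
  exact ae_iff.2 (nonpos_iff_eq_zero.1 (ge_of_tendsto (tendsto_measure_setOf_natCast_lt (hτ i))
    ((eventually_ge_atTop ⌈T⌉₊).mono fun n hn => hle n (Nat.ceil_le.1 hn))))

theorem aestronglyMeasurable_exp_neg_integral (hm : m ≤ m0) (hρ : Measurable (uncurry ρ))
    (hρ0 : ∀ s ω, 0 ≤ ρ s ω) (hρm : ∀ s, 0 ≤ s → Measurable[m] (ρ s)) {a : ℝ} (ha : 0 ≤ a)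
    (b : ℝ) : AEStronglyMeasurable[m] (fun ω => Real.exp (-∫ s in Ioc a b, ρ s ω)) μ := by
  have : IsFiniteMeasure (volume.restrict (Ioc a b)) :=
    isFiniteMeasure_restrict.2 measure_Ioc_lt_top.ne
  exact (Real.continuous_exp.comp continuous_neg).comp_aestronglyMeasurable
    (aestronglyMeasurable_integral_of_nonneg hm hρ hρ0
      (ae_restrict_of_forall_mem measurableSet_Ioc fun s hs => hρm s (ha.trans hs.1.le)))

theorem measureReal_survivalSet_inter_eq [DecidableEq ι] (hm : m ≤ m0)
    (hDS : IsDoublyStochastic m μ τ ρ) (hτ : ∀ i, Measurable (τ i)) (hρ : Measurable (uncurry ρ))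
    (hρ0 : ∀ s ω, 0 ≤ ρ s ω) (hρm : ∀ s, 0 ≤ s → Measurable[m] (ρ s)) {b : ι → ℝ} {t T : ℝ}
    (hb0 : ∀ j, 0 ≤ b j) (hbt : ∀ j, b j ≤ t) (ht : 0 ≤ t) (htT : t ≤ T) (i : ι) :
    μ.real (survivalSet τ b ∩ {ω | T < τ i ω})
      = ∫ ω in survivalSet τ b ∩ {ω | t < τ i ω}, Real.exp (-∫ s in Ioc t T, ρ s ω) ∂μ := by
  have hupd {r : ℝ} (hr : 0 ≤ r) (j : ι) : 0 ≤ update b i r j := by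
    rcases eq_or_ne j i with rfl | hj
    · simpa using hr
    · simpa [hj] using hb0 j
  have hadd : ∀ᵐ ω ∂μ,
      ∫ s in Ioc 0 T, ρ s ω = (∫ s in Ioc 0 t, ρ s ω) + ∫ s in Ioc t T, ρ s ω :=
    (ae_integrableOn_of_isDoublyStochastic hm hDS hτ hρ hρ0 i T).mono fun ω hω => by
      rw [← Ioc_union_Ioc_eq_Ioc ht htT, setIntegral_union (Ioc_disjoint_Ioc_of_le le_rfl)
        measurableSet_Ioc (hω.mono_set (Ioc_subset_Ioc_right htT))
        (hω.mono_set (Ioc_subset_Ioc_left ht))]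
  rw [survivalSet_inter_setOf_lt ((hbt i).trans htT), survivalSet_inter_setOf_lt (hbt i),
    setIntegral_survivalSet hm hDS hτ (hupd ht)
      (aestronglyMeasurable_exp_neg_integral hm hρ hρ0 hρm ht T)
      (integrable_exp_neg_integral hρ hρ0 t T)]
  calc μ.real (survivalSet τ (update b i T))
      = ∫ ω in survivalSet τ (update b i T), (1 : ℝ) ∂μ := by simp
    _ = ∫ ω, 1 * condSurvival ρ (update b i T) ω ∂μ :=
        setIntegral_survivalSet hm hDS hτ (hupd (ht.trans htT)) aestronglyMeasurable_const
          (integrable_const 1)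
    _ = _ := integral_congr_ae (hadd.mono fun ω h =>
        (one_mul _).trans (condSurvival_update_of_integral_eq_add h b i))

theorem setIntegral_survivalSet_numAlive [DecidableEq ι] (hm : m ≤ m0)
    (hDS : IsDoublyStochastic m μ τ ρ) (hτ : ∀ i, Measurable (τ i)) (hρ : Measurable (uncurry ρ))
    (hρ0 : ∀ s ω, 0 ≤ ρ s ω) (hρm : ∀ s, 0 ≤ s → Measurable[m] (ρ s)) {b : ι → ℝ} {t T : ℝ}
    (hb0 : ∀ j, 0 ≤ b j) (hbt : ∀ j, b j ≤ t) (ht : 0 ≤ t) (htT : t ≤ T) :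
    ∫ ω in survivalSet τ b, numAlive τ T ω ∂μ
      = ∫ ω in survivalSet τ b, numAlive τ t ω * Real.exp (-∫ s in Ioc t T, ρ s ω) ∂μ := by
  have h1 := setIntegral_numAlive_mul hτ T (integrable_const (1 : ℝ)) (μ := μ) (survivalSet τ b)
  simp only [mul_one, setIntegral_const, smul_eq_mul] at h1
  rw [h1, setIntegral_numAlive_mul hτ t (integrable_exp_neg_integral hρ hρ0 t T)]
  exact Finset.sum_congr rfl fun i _ =>
    measureReal_survivalSet_inter_eq hm hDS hτ hρ hρ0 hρm hb0 hbt ht htT i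

end DoublyStochastic

theorem condExp_numAlive {Ω ι : Type*} [Fintype ι] {m G m0 : MeasurableSpace Ω}
    {μ : Measure[m0] Ω} [IsFiniteMeasure μ] {τ : ι → Ω → ℝ} {ρ : ℝ → Ω → ℝ} (hm : m ≤ m0)
    (hDS : IsDoublyStochastic m μ τ ρ) (hτ : ∀ i, Measurable (τ i)) (hτ0 : ∀ i ω, 0 < τ i ω)
    (hρ : Measurable (uncurry ρ)) (hρ0 : ∀ s ω, 0 ≤ ρ s ω) (hρm : ∀ s, 0 ≤ s → Measurable[m] (ρ s))
    {t T : ℝ} (hG : G ≤ MeasurableSpace.generateFrom (survivalSet τ '' Icc 0 fun _ => t))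
    (hNt : Measurable[G] (numAlive τ t)) (ht : 0 ≤ t) (htT : t ≤ T) :
    μ[numAlive τ T | G] =ᵐ[μ]
      fun ω => numAlive τ t ω * (μ[fun ω => Real.exp (-∫ s in Ioc t T, ρ s ω) | G]) ω := by
  classical
  set Y := fun ω => Real.exp (-∫ s in Ioc t T, ρ s ω)
  have hSm : ∀ s ∈ survivalSet τ '' Icc 0 (fun _ => t), MeasurableSet s := by
    rintro _ ⟨b, -, rfl⟩
    exact measurableSet_survivalSet hτ b
  have hGle : G ≤ m0 := hG.trans (MeasurableSpace.generateFrom_le hSm)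
  have hY : Integrable Y μ := integrable_exp_neg_integral hρ hρ0 t T
  have hNT : Integrable (numAlive τ T) μ :=
    .of_bound (measurable_numAlive hτ T).aestronglyMeasurable _ (ae_of_all _ (abs_numAlive_le T))
  have hNY : Integrable (fun ω => numAlive τ t ω * Y ω) μ :=
    hY.bdd_mul (measurable_numAlive hτ t).aestronglyMeasurable (ae_of_all _ (abs_numAlive_le t))
  have hS (b : ι → ℝ) (hb : b ∈ Icc 0 fun _ => t) :=
    setIntegral_survivalSet_numAlive hm hDS hτ hρ hρ0 hρm hb.1 hb.2 ht htT
  have hGset (s : Set Ω) (hs : MeasurableSet[G] s) :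
      ∫ ω in s, numAlive τ T ω ∂μ = ∫ ω in s, numAlive τ t ω * Y ω ∂μ :=
    setIntegral_eq_of_isPiSystem (isPiSystem_survivalSet_image_Icc t) hSm hNT hNY
      (by simpa [survivalSet_zero hτ0] using hS 0 ⟨le_rfl, fun _ => ht⟩)
      (by rintro _ ⟨b, hb, rfl⟩; exact hS b hb) (hG _ hs)
  calc μ[numAlive τ T | G] =ᵐ[μ] μ[fun ω => numAlive τ t ω * Y ω | G] :=
        ae_eq_condExp_of_forall_setIntegral_eq hGle hNY
          (fun s _ _ => integrable_condExp.integrableOn)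
          (fun s hs _ => by rw [setIntegral_condExp hGle hNT hs, hGset s hs])
          stronglyMeasurable_condExp.aestronglyMeasurable
    _ =ᵐ[μ] _ := condExp_mul_of_stronglyMeasurable_left hNt.stronglyMeasurable hNY hY

theorem stmt_5_general {Ω : Type*} (GN : ℝ → MeasurableSpace Ω)
    [m0 : MeasurableSpace Ω] (μ : Measure Ω) [IsProbabilityMeasure μ]
    (X : ℝ → Ω → ℝ) (hX : Measurable (Function.uncurry X))
    (lam : ℝ → ℝ → ℝ) (hlam : Measurable (Function.uncurry lam))
    (hlam_pos : ∀ t x, 0 < lam t x)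
    (la : ℕ)
    (τ : Fin la → Ω → ℝ) (hτ_meas : ∀ i, Measurable (τ i))
    (hτ_pos : ∀ i ω, 0 < τ i ω)
    (GX : MeasurableSpace Ω)
    (hGX : GX = ⨆ (u : ℝ) (_ : 0 ≤ u), MeasurableSpace.comap (X u) inferInstance)
    (hDS : ∀ t : Fin la → ℝ, (∀ i, 0 ≤ t i) →
      μ[(fun ω => ∏ i, if t i < τ i ω then (1:ℝ) else 0) | GX]
        =ᵐ[μ] fun ω => ∏ i, Real.exp (-∫ s in Ioc (0:ℝ) (t i), lam s (X s ω)))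
    (N : ℝ → Ω → ℝ)
    (hN : ∀ (s : ℝ) (ω : Ω), N s ω = ∑ i, if τ i ω ≤ s then (1:ℝ) else 0)
    (hGN : ∀ t : ℝ, GN t = ⨆ (s : ℝ) (_ : 0 ≤ s) (_ : s ≤ t),
      MeasurableSpace.comap (N s) inferInstance)
    (t T : ℝ) (ht : 0 ≤ t) (htT : t ≤ T) :
    μ[(fun ω => (la : ℝ) - N T ω) | GN t]
      =ᵐ[μ] fun ω => ((la : ℝ) - N t ω)
        * (μ[(fun ω' => Real.exp (-∫ s in Ioc t T, lam s (X s ω'))) | GN t]) ω := by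
  have hXGX (s : ℝ) (hs : 0 ≤ s) : Measurable[GX] (X s) :=
    hGX ▸ Measurable.of_comap_le (le_iSup₂_of_le s hs le_rfl)
  have hGX_le : GX ≤ m0 := hGX ▸ iSup₂_le fun u _ => (hX.comp measurable_prodMk_left).comap_le
  have hN_alive (r : ℝ) (ω : Ω) : (la : ℝ) - N r ω = numAlive τ r ω := by
    simpa [hN] using card_sub_sum_ite_le_eq_numAlive (τ := τ) r ω
  have hGN_le : GN t ≤ MeasurableSpace.generateFrom (survivalSet τ '' Icc 0 fun _ => t) := by
    rw [hGN]
    refine iSup₂_le fun s hs => iSup_le fun hst => ?_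
    have hNs : N s = fun ω => (la : ℝ) - numAlive τ s ω := funext fun ω => by
      rw [← hN_alive, sub_sub_cancel]
    rw [hNs]
    exact (measurable_const.sub (measurable_numAlive_generateFrom hτ_pos hs hst)).comap_le
  have hNt : Measurable[GN t] (numAlive τ t) := by
    rw [show numAlive τ t = fun ω => (la : ℝ) - N t ω from funext fun ω => (hN_alive t ω).symm]
    exact measurable_const.sub <|
      Measurable.of_comap_le (hGN t ▸ le_iSup₂_of_le t ht (le_iSup_of_le le_rfl le_rfl))
  simp only [hN_alive]
  exact condExp_numAlive hGX_le hDS hτ_meas hτ_pos (hlam.comp (measurable_fst.prodMk hX))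
    (fun s ω => (hlam_pos _ _).le) (fun s hs => (hlam.comp measurable_prodMk_left).comp (hXGX s hs))
    hGN_le hNt ht htT

/-- For the death-counting process `N` of doubly-stochastic lifetimes and `0 ≤ t ≤ T`,
`E[l_a − N_T | 𝒢^N_t] = (l_a − N_t) · E[exp(−∫_t^T λ(s, X_s) ds) | 𝒢^N_t]` a.s.; i.e. the
process `B_t = E[l_a − N_T | 𝒢^N_t]` equals `(l_a − N_t)` times the `𝒢^N`-projection of the
survival process. -/
theorem stmt_5 {Ω : Type*} (GN : ℝ → MeasurableSpace Ω)
    [m0 : MeasurableSpace Ω] (μ : Measure Ω) [IsProbabilityMeasure μ]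
    (X : ℝ → Ω → ℝ) (hX : Measurable (Function.uncurry X))
    (lam : ℝ → ℝ → ℝ) (hlam : Measurable (Function.uncurry lam))
    (hlam_pos : ∀ t x, 0 < lam t x)
    (hlam_int : ∀ Tstar : ℝ, 0 < Tstar →
      Integrable (fun ω => ∫ u in Ioc (0:ℝ) Tstar, lam u (X u ω)) μ)
    (la : ℕ) (hla : 1 ≤ la)
    (τ : Fin la → Ω → ℝ) (hτ_meas : ∀ i, Measurable (τ i))
    (hτ_pos : ∀ i ω, 0 < τ i ω)
    (GX : MeasurableSpace Ω)
    (hGX : GX = ⨆ (u : ℝ) (_ : 0 ≤ u), MeasurableSpace.comap (X u) inferInstance)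
    (hDS : ∀ t : Fin la → ℝ, (∀ i, 0 ≤ t i) →
      μ[(fun ω => ∏ i, if t i < τ i ω then (1:ℝ) else 0) | GX]
        =ᵐ[μ] fun ω => ∏ i, Real.exp (-∫ s in Ioc (0:ℝ) (t i), lam s (X s ω)))
    (N : ℝ → Ω → ℝ)
    (hN : ∀ (s : ℝ) (ω : Ω), N s ω = ∑ i, if τ i ω ≤ s then (1:ℝ) else 0)
    (hGN : ∀ t : ℝ, GN t = ⨆ (s : ℝ) (_ : 0 ≤ s) (_ : s ≤ t),
      MeasurableSpace.comap (N s) inferInstance)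
    (t T : ℝ) (ht : 0 ≤ t) (htT : t ≤ T) :
    μ[(fun ω => (la : ℝ) - N T ω) | GN t]
      =ᵐ[μ] fun ω => ((la : ℝ) - N t ω)
        * (μ[(fun ω' => Real.exp (-∫ s in Ioc t T, lam s (X s ω'))) | GN t]) ω :=
  stmt_5_general GN (m0 := m0) μ X hX lam hlam hlam_pos la τ hτ_meas hτ_pos GX hGX hDS N hN hGN t T
    ht htT
end
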